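/- Let m be a metric on the edges of G*π that respects the input weights w, is customized, and satisfies m(x,y) ≤ m(x,z) + m(z,y) for every edge {x,y} of G*π and every intermediate or upper triangle {x,y,z} of it (where m(u,v) denotes the weight of the edge {u,v} of G*π). Then for every edge {x,y} of G*π, m(x,y) equals the shortest xy-path distance in G under w; that is, m is the perfect metric m_P. -/

import Mathlib

/-!
The single edge `{x, y}` is a path of `G*π`, so `gdist G w x y ≤ m x y` because `m` respects `w`.
Conversely, as `m` is customized it suffices to show that every up-down `x`-`y` path is at least
`m x y` long; by symmetry of `m` (reversing the path) we may assume `rk x < rk y`. Then the path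
is the edge itself or starts with an upward step `x → v`. Contracting a vertex makes its
higher-ranked neighbours pairwise adjacent, so `{v, y}` is an edge of `G*π` and `{x, y, v}` is an
intermediate or upper triangle of `{x, y}`. Hence `m x y ≤ m x v + m v y`, and induction on the
length applies to the remaining up-down path from `v` to `y`.
-/

open SimpleGraph
open scoped ENNReal

variable {V : Type*}

/-- One step of vertex contraction: remove `v` from the current graph and add an edge
between every pair of its current neighbors. -/
def chStep (H : SimpleGraph V) (v : V) : SimpleGraph V where
  Adj a b := a ≠ b ∧ a ≠ v ∧ b ≠ v ∧ (H.Adj a b ∨ (H.Adj v a ∧ H.Adj v b))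
  symm := by
    constructor
    rintro a b ⟨h1, h2, h3, h4⟩
    refine ⟨h1.symm, h3, h2, ?_⟩
    rcases h4 with h | ⟨ha, hb⟩
    · exact Or.inl h.symm
    · exact Or.inr ⟨hb, ha⟩
  loopless := ⟨fun a h => h.1 rfl⟩

/-- All edges ever present while contracting the vertices of the list in order:
the edges of the initial graph together with all added shortcuts. -/
def chList : SimpleGraph V → List V → SimpleGraph V
  | H, [] => H
  | H, v :: l => H ⊔ chList (chStep H v) l

/-- The rank of a vertex with respect to the contraction order `π`. -/
def rk {n : ℕ} (π : Fin n ≃ V) (v : V) : ℕ := (π.symm v : ℕ)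

/-- The contraction hierarchy `G*π`: contract `π 0, π 1, …` in this order and collect
all original edges and all added shortcuts. -/
def chGraph {n : ℕ} (G : SimpleGraph V) (π : Fin n ≃ V) : SimpleGraph V :=
  chList G ((List.finRange n).map ⇑π)

/-- A list of vertices is up-down w.r.t. a rank function: ranks strictly increase
along a prefix and strictly decrease along the remaining suffix, the two parts
meeting at the maximum-rank vertex. -/
def IsUpDown (r : V → ℕ) (l : List V) : Prop :=
  ∃ l₁ x l₂, l = l₁ ++ x :: l₂ ∧
    List.Chain' (fun a b => r a < r b) (l₁ ++ [x]) ∧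
    List.Chain' (fun a b => r b < r a) (x :: l₂)

/-- Reachability in the upward directed graph `G^∧π` (edges of `G*π` directed from
lower to higher rank): the vertex set of the search space `SS v`. -/
def UpReach {n : ℕ} (G : SimpleGraph V) (π : Fin n ≃ V) (v u : V) : Prop :=
  Relation.ReflTransGen (fun a b => (chGraph G π).Adj a b ∧ rk π a < rk π b) v u

/-- Length of a walk: the sum of the weights of its edges. -/
noncomputable def wlen {H : SimpleGraph V} (m : V → V → ℝ≥0∞) {s t : V}
    (p : H.Walk s t) : ℝ≥0∞ :=
  (p.darts.map (fun d => m d.toProd.1 d.toProd.2)).sum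

/-- Shortest path distance in a graph `H` under edge weights `m`. -/
noncomputable def gdist (H : SimpleGraph V) (m : V → V → ℝ≥0∞) (s t : V) : ℝ≥0∞ :=
  ⨅ (p : H.Walk s t), wlen m p

/-- Minimum length of an up-down `s`-`t` path in `G*π`. -/
noncomputable def updist {n : ℕ} (G : SimpleGraph V) (π : Fin n ≃ V)
    (m : V → V → ℝ≥0∞) (s t : V) : ℝ≥0∞ :=
  ⨅ (p : (chGraph G π).Walk s t) (_ : IsUpDown (rk π) p.support), wlen m p

/-- Minimum length of a strictly rank-increasing `u`-`v` path in `G*π`. -/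
noncomputable def upOnlyDist {n : ℕ} (G : SimpleGraph V) (π : Fin n ≃ V)
    (m : V → V → ℝ≥0∞) (u v : V) : ℝ≥0∞ :=
  ⨅ (p : (chGraph G π).Walk u v)
    (_ : List.Chain' (fun a b => rk π a < rk π b) p.support), wlen m p

/-- `S` is a balanced separator of the subgraph of `G` induced by `U`. -/
def IsBalancedSepOn [DecidableEq V] (G : SimpleGraph V) (U S : Finset V) : Prop :=
  S ⊆ U ∧ ∃ A B : Finset V, A ⊆ U ∧ B ⊆ U ∧
    Disjoint A B ∧ Disjoint A S ∧ Disjoint B S ∧ A ∪ B ∪ S = U ∧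
    (∀ a ∈ A, ∀ b ∈ B, ¬ G.Adj a b) ∧
    3 * A.card ≤ 2 * U.card ∧ 3 * B.card ≤ 2 * U.card

/-- Nested dissection orders (as lists, earliest contracted first, separator last)
of induced subgraphs of `G`, in which the separator chosen at every recursion step on
a `k`-vertex subgraph is balanced and has cardinality at most `c * k ^ α`. -/
inductive IsNDOrder [DecidableEq V] (G : SimpleGraph V) (c α : ℝ) : Finset V → List V → Prop
  | empty : IsNDOrder G c α ∅ []
  | step {U S A B : Finset V} {lA lB lS : List V} :
      Disjoint A B → Disjoint A S → Disjoint B S → A ∪ B ∪ S = U →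
      (∀ a ∈ A, ∀ b ∈ B, ¬ G.Adj a b) →
      3 * A.card ≤ 2 * U.card → 3 * B.card ≤ 2 * U.card →
      ((S.card : ℝ) ≤ c * (U.card : ℝ) ^ α) →
      lS.Nodup → lS.toFinset = S →
      IsNDOrder G c α A lA → IsNDOrder G c α B lB →
      IsNDOrder G c α U (lA ++ lB ++ lS)

/-- Number of vertices of the search space `SS v` in `G^∧π`. -/
noncomputable def nVertsSS {n : ℕ} (G : SimpleGraph V) (π : Fin n ≃ V) (v : V) : ℕ :=
  {u | UpReach G π v u}.ncard

/-- Number of arcs of the search space `SS v` in `G^∧π`: arcs of `G^∧π` with both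
endpoints reachable from `v`. -/
noncomputable def nArcsSS {n : ℕ} (G : SimpleGraph V) (π : Fin n ≃ V) (v : V) : ℕ :=
  {q : V × V | (chGraph G π).Adj q.1 q.2 ∧ rk π q.1 < rk π q.2 ∧
    UpReach G π v q.1 ∧ UpReach G π v q.2}.ncard

/-- The rank sequence of a walk: for each edge, the minimum of the ranks of its
endpoints, sorted in decreasing order. -/
def rankSeq {H : SimpleGraph V} (r : V → ℕ) {s t : V} (p : H.Walk s t) : List ℕ :=
  (p.darts.map (fun d => min (r d.toProd.1) (r d.toProd.2))).insertionSort (· ≥ ·)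

/-- Directed length of a walk in `G*π` under a pair of directed metrics `(mu, md)`:
each edge traversed from lower rank to higher rank costs its upward weight,
each edge traversed from higher rank to lower rank costs its downward weight. -/
noncomputable def dlen {H : SimpleGraph V} (r : V → ℕ) (mu md : V → V → ℝ≥0∞)
    {s t : V} (p : H.Walk s t) : ℝ≥0∞ :=
  (p.darts.map (fun d =>
    if r d.toProd.1 < r d.toProd.2 then mu d.toProd.1 d.toProd.2
    else md d.toProd.2 d.toProd.1)).sum

/-- Length of a directed walk `s :: l` under arc weights `wD`. -/
noncomputable def dWalkLen (wD : V → V → ℝ≥0∞) : V → List V → ℝ≥0∞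
  | _, [] => 0
  | s, x :: l => wD s x + dWalkLen wD x l

/-- Shortest directed path distance in the directed graph `D` under arc weights `wD`. -/
noncomputable def ddist (D : V → V → Prop) (wD : V → V → ℝ≥0∞) (s t : V) : ℝ≥0∞ :=
  ⨅ (l : List V) (_ : List.Chain D s l ∧ l.getLastD s = t), dWalkLen wD s l


lemma le_chList (H : SimpleGraph V) : ∀ l : List V, H ≤ chList H l
  | [] => le_rfl
  | _ :: _ => le_sup_left

lemma chList_not_adj_of_forall_not_adj {v : V} :
    ∀ (l : List V) {H : SimpleGraph V}, (∀ u, ¬ H.Adj v u) → ∀ u, ¬ (chList H l).Adj v u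
  | [], _, hv, u, h => hv u h
  | x :: l, H, hv, u, h => by
    rcases h with h | h
    · exact hv u h
    · refine chList_not_adj_of_forall_not_adj l (fun z hz => ?_) u h
      rcases hz.2.2.2 with hz | hz
      exacts [hv z hz, hv x hz.1.symm]

lemma chList_cons_adj_of_adj {H : SimpleGraph V} {l : List V} {x a b : V} (hab : a ≠ b)
    (hxa : (chList H (x :: l)).Adj x a) (hxb : (chList H (x :: l)).Adj x b) :
    (chList H (x :: l)).Adj a b := by
  have hx : ∀ u, ¬ (chList (chStep H x) l).Adj x u :=
    chList_not_adj_of_forall_not_adj l fun u h => h.2.1 rfl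
  have hHxa : H.Adj x a := hxa.resolve_right (hx a)
  have hHxb : H.Adj x b := hxb.resolve_right (hx b)
  exact Or.inr <| le_chList _ l ⟨hab, hHxa.ne.symm, hHxb.ne.symm, Or.inr ⟨hHxa, hHxb⟩⟩

lemma chList_cons_adj_chStep {H : SimpleGraph V} {l : List V} {v y z : V} (hy : y ≠ v)
    (hz : z ≠ v) (h : (chList H (v :: l)).Adj y z) : (chList (chStep H v) l).Adj y z :=
  h.elim (fun h => le_chList _ l ⟨h.ne, hy, hz, Or.inl h⟩) id

/-- Contracting `x` makes its not yet contracted neighbours pairwise adjacent. -/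
lemma chList_append_cons_adj_of_adj {x a b : V} {l₂ : List V} (hab : a ≠ b) :
    ∀ (l₁ : List V) {H : SimpleGraph V}, a ∉ l₁ → b ∉ l₁ →
      (chList H (l₁ ++ x :: l₂)).Adj x a → (chList H (l₁ ++ x :: l₂)).Adj x b →
      (chList H (l₁ ++ x :: l₂)).Adj a b
  | [], _, _, _, hxa, hxb => chList_cons_adj_of_adj hab hxa hxb
  | v :: l₁, H, ha, hb, hxa, hxb => by
    rw [List.mem_cons, not_or] at ha hb
    by_cases hxv : x = v
    · subst hxv
      exact chList_cons_adj_of_adj hab hxa hxb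
    · exact Or.inr <| chList_append_cons_adj_of_adj hab l₁ ha.2 hb.2
        (chList_cons_adj_chStep hxv ha.1 hxa) (chList_cons_adj_chStep hxv hb.1 hxb)

lemma rk_injective {n : ℕ} (π : Fin n ≃ V) : Function.Injective (rk π) :=
  fun _ _ h => π.symm.injective (Fin.ext h)

lemma pairwise_rk_lt_map_finRange {n : ℕ} (π : Fin n ≃ V) :
    ((List.finRange n).map π).Pairwise (fun a b => rk π a < rk π b) := by
  simpa [List.pairwise_map, rk] using (List.sortedLT_finRange n).pairwise

def LowerTriangleClosed (H : SimpleGraph V) (r : V → ℕ) : Prop :=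
  ∀ ⦃x a b⦄, H.Adj x a → H.Adj x b → a ≠ b → r x < r a → r x < r b → H.Adj a b

lemma chGraph_lowerTriangleClosed {n : ℕ} (G : SimpleGraph V) (π : Fin n ≃ V) :
    LowerTriangleClosed (chGraph G π) (rk π) := by
  intro x a b hxa hxb hab hra hrb
  have hx : x ∈ (List.finRange n).map π :=
    List.mem_map.mpr ⟨π.symm x, List.mem_finRange _, π.apply_symm_apply x⟩
  obtain ⟨l₁, l₂, hL⟩ := List.append_of_mem hx
  have hlow : ∀ u ∈ l₁, rk π u < rk π x := by
    have := pairwise_rk_lt_map_finRange π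
    rw [hL, List.pairwise_append] at this
    exact fun u hu => this.2.2 u hu x List.mem_cons_self
  unfold chGraph at hxa hxb ⊢
  rw [hL] at hxa hxb ⊢
  exact chList_append_cons_adj_of_adj hab l₁ (fun h => (hlow a h).not_gt hra)
    (fun h => (hlow b h).not_gt hrb) hxa hxb

namespace IsUpDown

variable {r : V → ℕ}

lemma reverse {l : List V} (h : IsUpDown r l) : IsUpDown r l.reverse := by
  obtain ⟨l₁, x, l₂, rfl, hup, hdown⟩ := h
  refine ⟨l₂.reverse, x, l₁.reverse, by simp, ?_, ?_⟩
  · have h := (List.isChain_reverse (R := fun a b => r a < r b)).mpr hdown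
    rwa [List.reverse_cons] at h
  · have h := (List.isChain_reverse (R := fun a b => r b < r a)).mpr hup
    rwa [List.reverse_append, List.reverse_singleton, List.singleton_append] at h

lemma of_cons {a : V} {l : List V} (h : IsUpDown r (a :: l)) (hl : l ≠ []) : IsUpDown r l := by
  obtain ⟨l₁, x, l₂, heq, hup, hdown⟩ := h
  cases l₁ with
  | nil =>
    obtain ⟨rfl, rfl⟩ := List.cons.inj heq
    obtain ⟨y, l₂, rfl⟩ := List.exists_cons_of_ne_nil hl
    exact ⟨[], y, l₂, rfl, List.isChain_singleton _, hdown.tail⟩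
  | cons c l₁ =>
    obtain ⟨rfl, rfl⟩ := List.cons.inj heq
    exact ⟨l₁, x, l₂, rfl, hup.tail, hdown⟩

lemma lt_of_cons_cons {a v b : V} {l : List V} (h : IsUpDown r (a :: v :: l))
    (hb : b ∈ v :: l) (hab : r a < r b) : r a < r v := by
  obtain ⟨l₁, x, l₂, heq, hup, hdown⟩ := h
  cases l₁ with
  | nil =>
    obtain ⟨rfl, rfl⟩ := List.cons.inj heq
    have hbelow := List.pairwise_cons.mp (List.isChain_iff_pairwise.mp hdown)
    exact absurd (hbelow.1 b hb) hab.not_gt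
  | cons c l₁ =>
    obtain ⟨rfl, hsplit⟩ := List.cons.inj heq
    have hstep := (List.isChain_cons.mp hup).1
    cases l₁ <;> obtain ⟨rfl, -⟩ := List.cons.inj hsplit <;> exact hstep _ (by simp)

end IsUpDown

section UpDownPaths

variable {H : SimpleGraph V} {m : V → V → ℝ≥0∞}

lemma wlen_cons {a v b : V} (h : H.Adj a v) (q : H.Walk v b) :
    wlen m (Walk.cons h q) = m a v + wlen m q := by
  simp [wlen]

lemma wlen_reverse (hm : ∀ a b, m a b = m b a) {a b : V} (p : H.Walk a b) :
    wlen m p.reverse = wlen m p := by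
  simp only [wlen, Walk.darts_reverse, List.map_reverse, List.sum_reverse, List.map_map]
  exact congrArg List.sum (List.map_congr_left fun d _ => hm _ _)

lemma wlen_toWalk {a b : V} (h : H.Adj a b) : wlen m h.toWalk = m a b := by
  simp [wlen, Adj.toWalk]

theorem le_wlen_of_isUpDown {r : V → ℕ} (hr : Function.Injective r)
    (hH : LowerTriangleClosed H r) (hm : ∀ a b, m a b = m b a)
    (htri : ∀ x y z, H.Adj x y → H.Adj x z → H.Adj z y → r x < r y → r x < r z →
      m x y ≤ m x z + m z y)
    {a b : V} (hab : H.Adj a b) (p : H.Walk a b) (hp : IsUpDown r p.support) :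
    m a b ≤ wlen m p := by
  induction hk : p.length using Nat.strong_induction_on generalizing a b with
  | _ k ih =>
  wlog hlt : r a < r b generalizing a b with hsymm
  · have hba : r b < r a := lt_of_le_of_ne (not_lt.mp hlt) (hr.ne hab.ne.symm)
    rw [hm, ← wlen_reverse hm]
    exact hsymm hab.symm p.reverse (by simpa using hp.reverse) (by simp [hk]) hba
  cases p with
  | nil => exact absurd rfl hab.ne
  | @cons _ v _ hav q =>
    rw [wlen_cons]
    by_cases hvb : v = b
    · subst hvb
      exact le_self_add
    have hsupp : IsUpDown r (a :: q.support) := by simpa using hp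
    have hav_lt : r a < r v := by
      rw [← q.cons_tail_support] at hsupp
      exact hsupp.lt_of_cons_cons (by rw [q.cons_tail_support]; exact q.end_mem_support) hlt
    have hvb_adj : H.Adj v b := hH hav hab hvb hav_lt hlt
    have hq : m v b ≤ wlen m q :=
      ih q.length (by simp [← hk]) hvb_adj q (hsupp.of_cons q.support_ne_nil) rfl
    calc m a b ≤ m a v + m v b := htri a b v hab hav hvb_adj hlt hav_lt
      _ ≤ m a v + wlen m q := by gcongr

end UpDownPaths

theorem stmt8_general {V : Type*} {n : ℕ} (G : SimpleGraph V)
    (π : Fin n ≃ V) (w m : V → V → ℝ≥0∞)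
    (hm_symm : ∀ a b, m a b = m b a)
    (hresp : ∀ s t, gdist (chGraph G π) m s t = gdist G w s t)
    (hcust : ∀ s t, updist G π m s t = gdist (chGraph G π) m s t)
    (hiu : ∀ x y z, (chGraph G π).Adj x y → (chGraph G π).Adj x z →
      (chGraph G π).Adj z y → rk π x < rk π y → rk π x < rk π z →
      m x y ≤ m x z + m z y) :
    ∀ x y, (chGraph G π).Adj x y → m x y = gdist G w x y := by
  intro x y hxy
  rw [← hresp]
  apply le_antisymm
  · rw [← hcust]
    exact le_iInf₂ fun p hp => le_wlen_of_isUpDown (rk_injective π)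
      (chGraph_lowerTriangleClosed G π) hm_symm hiu hxy p hp
  · exact (iInf_le _ hxy.toWalk).trans_eq (wlen_toWalk hxy)

/-- A metric `m` that respects `w`, is customized, and satisfies the
triangle inequality for all intermediate and upper triangles, is the perfect metric:
for every edge `{x, y}` of `G*π`, `m x y` is the shortest `x`-`y` distance in `G`. -/
theorem stmt8 {V : Type*} {n : ℕ} (G : SimpleGraph V) (hG : G.Connected)
    (π : Fin n ≃ V) (w m : V → V → ℝ≥0∞)
    (hw_symm : ∀ a b, w a b = w b a)
    (hw_pos : ∀ a b, G.Adj a b → 0 < w a b ∧ w a b < ⊤)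
    (hm_symm : ∀ a b, m a b = m b a)
    (hm_pos : ∀ a b, (chGraph G π).Adj a b → 0 < m a b)
    (hresp : ∀ s t, gdist (chGraph G π) m s t = gdist G w s t)
    (hcust : ∀ s t, updist G π m s t = gdist (chGraph G π) m s t)
    (hiu : ∀ x y z, (chGraph G π).Adj x y → (chGraph G π).Adj x z →
      (chGraph G π).Adj z y → rk π x < rk π y → rk π x < rk π z →
      m x y ≤ m x z + m z y) :
    ∀ x y, (chGraph G π).Adj x y → m x y = gdist G w x y :=
  stmt8_general G π w m hm_symm hresp hcust hiu
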